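/- With the two-soliton collision setup, the map u₂ ↦ u_{{1},2} given by u_{{1},2} = e^{φ₁₂(u₁,u₂)}·((ζ₁*-ζ₂*)/(ζ₁-ζ₂*))·(u₂ - ((ζ₁-ζ₁*)/(ζ₁-ζ₂*))⟨u₂,u₁⟩u₁) (for fixed unit vector u₁ and fixed distinct ζ₁, ζ₂ with positive imaginary parts) is a bijection of the unit sphere of ℂ^m onto itself. -/

import Mathlib

open Complex Matrix BigOperators

noncomputable section

/-- Hermitian inner product on ℂ^m, linear in the first slot. -/
def herm {m : ℕ} (u v : Fin m → ℂ) : ℂ := ∑ a, u a * (starRingEnd ℂ) (v a)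

/-!
Put `a = (ζ̄₁ - ζ̄₂) / (ζ₁ - ζ̄₂)`. Since `1 - (ζ₁ - ζ̄₁) / (ζ₁ - ζ̄₂) = a`, the map is
`v ↦ M v / ‖M v‖` for the linear map `M = a • D`, where `D` multiplies the `u₁`-component by `a`
and fixes its orthogonal complement: the square root in `e^{φ₁₂}` is exactly `‖M v‖`, because
`|a|² - 1 = Re((ζ₁ - ζ̄₁)(ζ₂ - ζ̄₂)) / |ζ₁ - ζ̄₂|²`. As `a ≠ 0`, `M` is invertible, and normalising
an invertible linear map is a bijection of the unit sphere, inverted by normalising `M⁻¹`.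
-/

open Set Metric

section Normalize

variable {𝕜 E : Type*} [RCLike 𝕜] [NormedAddCommGroup E] [NormedSpace 𝕜 E]

def normalizedApply (M : E ≃ₗ[𝕜] E) (x : E) : E := (‖M x‖ : 𝕜)⁻¹ • M x

lemma norm_normalizedApply (M : E ≃ₗ[𝕜] E) {x : E} (hx : x ≠ 0) :
    ‖normalizedApply M x‖ = 1 :=
  norm_smul_inv_norm (M.map_ne_zero_iff.2 hx)

lemma normalizedApply_symm_normalizedApply (M : E ≃ₗ[𝕜] E) {x : E} (hx : ‖x‖ = 1) :
    normalizedApply M.symm (normalizedApply M x) = x := by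
  have hMx : ‖M x‖ ≠ 0 :=
    norm_ne_zero_iff.2 (M.map_ne_zero_iff.2 (ne_zero_of_norm_ne_zero (by simp [hx])))
  simp only [normalizedApply, map_smul, LinearEquiv.symm_apply_apply, norm_smul, norm_inv,
    RCLike.norm_ofReal, abs_norm, hx, mul_one, RCLike.ofReal_inv, inv_inv, smul_smul]
  rw [mul_inv_cancel₀ (RCLike.ofReal_ne_zero.2 hMx), one_smul]

lemma bijOn_normalizedApply_sphere (M : E ≃ₗ[𝕜] E) :
    BijOn (normalizedApply M) (sphere 0 1) (sphere 0 1) := by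
  have mapsTo (N : E ≃ₗ[𝕜] E) : MapsTo (normalizedApply N) (sphere 0 1) (sphere 0 1) :=
    fun x hx => by
      rw [mem_sphere_zero_iff_norm] at hx ⊢
      exact norm_normalizedApply N (ne_zero_of_norm_ne_zero (by simp [hx]))
  refine InvOn.bijOn ⟨fun x hx => ?_, fun y hy => ?_⟩ (mapsTo M) (mapsTo M.symm)
  · exact normalizedApply_symm_normalizedApply M (mem_sphere_zero_iff_norm.1 hx)
  · simpa using normalizedApply_symm_normalizedApply M.symm (mem_sphere_zero_iff_norm.1 hy)

end Normalize

section Dilation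

variable {𝕜 E : Type*} [RCLike 𝕜] [NormedAddCommGroup E] [InnerProductSpace 𝕜 E]

def dilationAlong (u : E) (a : 𝕜) : E →ₗ[𝕜] E :=
  LinearMap.id + (a - 1) • (innerₛₗ 𝕜 u).smulRight u

lemma dilationAlong_apply (u : E) (a : 𝕜) (x : E) :
    dilationAlong u a x = x + ((a - 1) * inner 𝕜 u x) • u := by
  simp [dilationAlong, smul_smul]

lemma norm_dilationAlong_sq {u : E} (hu : ‖u‖ = 1) (a : 𝕜) (x : E) :
    ‖dilationAlong u a x‖ ^ 2 = ‖x‖ ^ 2 + (‖a‖ ^ 2 - 1) * ‖inner 𝕜 u x‖ ^ 2 := by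
  rw [dilationAlong_apply, norm_add_sq (𝕜 := 𝕜), norm_smul, inner_smul_right,
    ← inner_conj_symm x u, hu]
  simp only [RCLike.norm_sq_eq_def, RCLike.mul_re, RCLike.mul_im, RCLike.conj_re, RCLike.conj_im,
    map_sub, RCLike.one_re, RCLike.one_im, mul_pow]
  ring

lemma dilationAlong_injective {u : E} (hu : ‖u‖ = 1) {a : 𝕜} (ha : a ≠ 0) :
    Function.Injective (dilationAlong u a) := by
  refine (injective_iff_map_eq_zero _).2 fun x hx => ?_
  have hux : a * inner 𝕜 u x = 0 := by
    simpa [dilationAlong_apply, inner_add_right, inner_smul_right, inner_self_eq_norm_sq_to_K, hu,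
      sub_one_mul] using congrArg (inner 𝕜 u) hx
  rw [dilationAlong_apply, (mul_eq_zero.1 hux).resolve_left ha, mul_zero, zero_smul,
    add_zero] at hx
  exact hx

end Dilation

lemma Set.BijOn.equiv_symm_comp_comp {α β : Type*} (e : α ≃ β) {f : β → β} {s : Set β}
    (h : BijOn f s s) : BijOn (e.symm ∘ f ∘ e) (e ⁻¹' s) (e ⁻¹' s) := by
  have he : BijOn e.symm s (e ⁻¹' s) := by
    simpa using e.symm.bijective.bijOn_preimage (t := e ⁻¹' s)
  exact he.comp (h.comp e.bijective.bijOn_preimage)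

lemma herm_eq_inner {m : ℕ} (u v : Fin m → ℂ) :
    herm u v = inner ℂ (WithLp.toLp 2 v) (WithLp.toLp 2 u) := by
  simp [herm, PiLp.inner_apply]

lemma herm_self_eq_one_iff {m : ℕ} (v : Fin m → ℂ) : herm v v = 1 ↔ ‖WithLp.toLp 2 v‖ = 1 := by
  rw [herm_eq_inner, inner_self_eq_norm_sq_to_K, ← RCLike.ofReal_pow, ← RCLike.ofReal_one,
    RCLike.ofReal_inj, pow_eq_one_iff_of_nonneg (norm_nonneg _) two_ne_zero]

lemma sub_conj_ne_zero_of_im_pos {z w : ℂ} (hz : 0 < z.im) (hw : 0 < w.im) :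
    z - (starRingEnd ℂ) w ≠ 0 := by
  intro h
  have := congrArg Complex.im h
  simp only [sub_im, conj_im, sub_neg_eq_add, zero_im] at this
  linarith

lemma norm_conj_sub_conj_div (z w d : ℂ) :
    ‖((starRingEnd ℂ) z - (starRingEnd ℂ) w) / d‖ = ‖(z - w) / d‖ := by
  rw [← map_sub, norm_div, norm_div, Complex.norm_conj]

lemma sub_conj_mul_sub_conj_re_div (z w : ℂ) (hd : z - (starRingEnd ℂ) w ≠ 0) :
    ((z - (starRingEnd ℂ) z) * (w - (starRingEnd ℂ) w)).re / ‖z - (starRingEnd ℂ) w‖ ^ 2 =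
      ‖(z - w) / (z - (starRingEnd ℂ) w)‖ ^ 2 - 1 := by
  rw [norm_div, div_pow, div_sub_one (pow_ne_zero 2 (norm_ne_zero_iff.2 hd))]
  congr 1
  simp only [Complex.sq_norm, Complex.normSq_apply, mul_re, sub_re, sub_im, conj_re, conj_im]
  ring

lemma sub_conj_div_eq_one_sub (z w : ℂ) (hd : z - (starRingEnd ℂ) w ≠ 0) :
    (z - (starRingEnd ℂ) z) / (z - (starRingEnd ℂ) w) =
      1 - ((starRingEnd ℂ) z - (starRingEnd ℂ) w) / (z - (starRingEnd ℂ) w) := by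
  field_simp
  ring

theorem stmt14 {m : ℕ} (ζ₁ ζ₂ : ℂ) (h1 : 0 < ζ₁.im) (h2 : 0 < ζ₂.im) (hne : ζ₁ ≠ ζ₂)
    (u₁ : Fin m → ℂ) (hu1 : herm u₁ u₁ = 1) :
    -- the two-soliton collision map v = u₂ ↦ u_{{1},2}, with e^{φ₁₂} depending on v
    let T : (Fin m → ℂ) → (Fin m → ℂ) := fun v a =>
      (((Real.sqrt ((‖(ζ₁ - ζ₂) / (ζ₁ - (starRingEnd ℂ) ζ₂)‖)^2 *
          (1 + ((ζ₁ - (starRingEnd ℂ) ζ₁) * (ζ₂ - (starRingEnd ℂ) ζ₂)).re /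
            (‖ζ₁ - (starRingEnd ℂ) ζ₂‖)^2 *
            (‖herm u₁ v‖)^2)))⁻¹ : ℝ) : ℂ) *
        (((starRingEnd ℂ) ζ₁ - (starRingEnd ℂ) ζ₂) / (ζ₁ - (starRingEnd ℂ) ζ₂)) *
        (v a - (ζ₁ - (starRingEnd ℂ) ζ₁) / (ζ₁ - (starRingEnd ℂ) ζ₂) *
          herm v u₁ * u₁ a)
    Set.BijOn T {v : Fin m → ℂ | herm v v = 1} {v : Fin m → ℂ | herm v v = 1} := by
  intro T
  have hd := sub_conj_ne_zero_of_im_pos h1 h2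
  set a := ((starRingEnd ℂ) ζ₁ - (starRingEnd ℂ) ζ₂) / (ζ₁ - (starRingEnd ℂ) ζ₂) with ha_def
  have ha : a ≠ 0 := div_ne_zero (sub_ne_zero.2 ((starRingEnd ℂ).injective.ne hne)) hd
  set u := WithLp.toLp 2 u₁
  have hu : ‖u‖ = 1 := (herm_self_eq_one_iff u₁).1 hu1
  let M := LinearEquiv.ofInjectiveEndo (a • dilationAlong u a)
    ((smul_right_injective _ ha).comp (dilationAlong_injective hu ha))
  have hS : {v : Fin m → ℂ | herm v v = 1} = WithLp.toLp 2 ⁻¹' sphere 0 1 := by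
    ext v; simp [herm_self_eq_one_iff]
  have hT : EqOn T (WithLp.ofLp ∘ normalizedApply M ∘ WithLp.toLp 2) {v | herm v v = 1} := by
    intro v hv
    have hx : ‖WithLp.toLp 2 v‖ = 1 := (herm_self_eq_one_iff v).1 hv
    have hinner : inner ℂ u (WithLp.toLp 2 v) = herm v u₁ := (herm_eq_inner v u₁).symm
    have hnorm : ‖(ζ₁ - ζ₂) / (ζ₁ - (starRingEnd ℂ) ζ₂)‖ ^ 2 *
        (1 + ((ζ₁ - (starRingEnd ℂ) ζ₁) * (ζ₂ - (starRingEnd ℂ) ζ₂)).re /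
          ‖ζ₁ - (starRingEnd ℂ) ζ₂‖ ^ 2 * ‖herm u₁ v‖ ^ 2) = ‖M (WithLp.toLp 2 v)‖ ^ 2 := by
      rw [sub_conj_mul_sub_conj_re_div _ _ hd, ← norm_conj_sub_conj_div, ← ha_def,
        LinearEquiv.coe_ofInjectiveEndo, LinearMap.smul_apply, norm_smul, mul_pow,
        norm_dilationAlong_sq hu, hx, hinner, herm_eq_inner u₁, herm_eq_inner v, norm_inner_symm]
      ring
    funext i
    simp only [T, M, Function.comp_apply, hnorm, Real.sqrt_sq (norm_nonneg _), normalizedApply,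
      LinearEquiv.coe_ofInjectiveEndo, LinearMap.smul_apply, dilationAlong_apply, hinner,
      sub_conj_div_eq_one_sub _ _ hd, smul_add, ofReal_inv, coe_algebraMap, PiLp.add_apply,
      PiLp.smul_apply, smul_eq_mul]
    ring
  rw [hT.bijOn_iff, hS]
  exact (bijOn_normalizedApply_sphere M).equiv_symm_comp_comp (WithLp.equiv 2 _).symm

end
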